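/- Let K̂ ⊂ ℝ^d be a bounded open set and let T be a C² map on an open set containing the closure of K̂ that restricts to a diffeomorphism of K̂ onto an open set K ⊂ ℝ^d, with det(DT(x̂)) > 0 for all x̂ in the closure of K̂. Let v̂ be a continuously differentiable vector field on an open set containing the closure of K̂, and let q̂ : K̂ → ℝ be continuous and bounded. Define v : K → ℝ^d by v(T(x̂)) := det(DT(x̂))⁻¹ DT(x̂) v̂(x̂) and q : K → ℝ by q(T(x̂)) := q̂(x̂). Then ∫_K (div v)(x) q(x) dx = ∫_{K̂} (div v̂)(x̂) q̂(x̂) dx̂. -/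

import Mathlib

open MeasureTheory

/-- The divergence of a vector field `w : ℝ^d → ℝ^d` at `x`:
`div w (x) = ∑ i ∂wᵢ/∂xᵢ (x)`, the trace of the Fréchet derivative. -/
noncomputable def pdiv {d : ℕ} (w : (Fin d → ℝ) → (Fin d → ℝ)) (x : Fin d → ℝ) : ℝ :=
  ∑ i, fderiv ℝ w x (Pi.single i 1) i

/-!
Differentiating `v ∘ T = (det DT)⁻¹ • DT v̂` at `x̂`, the second derivative `H = D²T(x̂)` enters
twice: through `DT`, contributing `(det DT)⁻¹ tr (DT⁻¹ ∘ H v̂)` to `div v (T x̂)`, and through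
`det DT`, whose derivative is `det DT · tr (DT⁻¹ ∘ H ·)` by Jacobi's formula, contributing the
same term with the opposite sign once `H` is known to be symmetric. Hence
`div v ∘ T = (det DT)⁻¹ div v̂`, and in the change of variables formula the Jacobian `det DT`
cancels `(det DT)⁻¹`.
-/

open Filter Topology

section Jacobi

variable {𝕜 : Type*} [NontriviallyNormedField 𝕜]

open Polynomial in
theorem Matrix.hasDerivAt_det_one_add_smul {n : Type*} [Fintype n] [DecidableEq n]
    (M : Matrix n n 𝕜) : HasDerivAt (fun t : 𝕜 => (1 + t • M).det) M.trace 0 := by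
  have heval : ∀ t : 𝕜, (det (1 + (X : 𝕜[X]) • M.map C)).eval t = (1 + t • M).det := by
    intro t
    rw [← coe_evalRingHom, RingHom.map_det]
    congr 1
    ext i j
    simp [Matrix.one_apply, apply_ite (eval t), mul_comm t]
  have hpoly := Polynomial.hasDerivAt (det (1 + (X : 𝕜[X]) • M.map C)) 0
  rw [derivative_det_one_add_X_smul] at hpoly
  simpa only [heval] using hpoly

theorem LinearMap.hasDerivAt_det_one_add_smul {E : Type*} [AddCommGroup E] [Module 𝕜 E]
    [FiniteDimensional 𝕜 E] (f : E →ₗ[𝕜] E) :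
    HasDerivAt (fun t : 𝕜 => LinearMap.det (1 + t • f)) (LinearMap.trace 𝕜 E f) 0 := by
  let b := Module.finBasis 𝕜 E
  simp_rw [← LinearMap.det_toMatrix b, map_add, map_smul, LinearMap.toMatrix_one,
    LinearMap.trace_eq_matrix_trace 𝕜 b]
  exact Matrix.hasDerivAt_det_one_add_smul _

variable {E : Type*} [NormedAddCommGroup E] [NormedSpace 𝕜 E] [FiniteDimensional 𝕜 E]

theorem ContinuousLinearMap.differentiable_det [CompleteSpace 𝕜] :
    Differentiable 𝕜 (fun A : E →L[𝕜] E => A.det) := by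
  let b := Module.finBasis 𝕜 E
  have hdet : (fun A : E →L[𝕜] E => A.det) = fun A =>
      ∑ σ : Equiv.Perm (Fin (Module.finrank 𝕜 E)),
        (Equiv.Perm.sign σ : 𝕜) * ∏ i, b.equivFunL (A (b i)) (σ i) := by
    ext A
    rw [ContinuousLinearMap.det, ← LinearMap.det_toMatrix b, Matrix.det_apply']
    simp [LinearMap.toMatrix_apply]
  rw [hdet]
  fun_prop

theorem ContinuousLinearMap.fderiv_det_apply [CompleteSpace 𝕜] (A : E ≃L[𝕜] E)
    (B : E →L[𝕜] E) :
    fderiv 𝕜 (fun A : E →L[𝕜] E => A.det) A B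
      = (A : E →L[𝕜] E).det * LinearMap.trace 𝕜 E ((A.symm : E →L[𝕜] E) ∘L B) := by
  set C : E →ₗ[𝕜] E := ↑((A.symm : E →L[𝕜] E) ∘L B)
  have hline : HasDerivAt (fun t : 𝕜 => (A : E →L[𝕜] E) + t • B) B 0 := by
    simpa using ((hasDerivAt_id (0 : 𝕜)).smul_const B).const_add (A : E →L[𝕜] E)
  have hchain : HasDerivAt (fun t : 𝕜 => ((A : E →L[𝕜] E) + t • B).det)
      (fderiv 𝕜 (fun A : E →L[𝕜] E => A.det) A B) 0 :=
    (differentiable_det (A : E →L[𝕜] E)).hasFDerivAt.comp_hasDerivAt_of_eq 0 hline (by simp)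
  have hfactor : ∀ t : 𝕜,
      ((A : E →L[𝕜] E) + t • B).det = (A : E →L[𝕜] E).det * LinearMap.det (1 + t • C) := by
    intro t
    rw [ContinuousLinearMap.det, ContinuousLinearMap.det, ← LinearMap.det_comp]
    congr 1
    ext x
    simp [C]
  have hjacobi := (LinearMap.hasDerivAt_det_one_add_smul C).const_mul (A : E →L[𝕜] E).det
  simp only [← hfactor] at hjacobi
  exact hchain.unique hjacobi

theorem ContinuousLinearMap.trace_smulRight_comp (φ : E →L[𝕜] 𝕜) (u : E) (P : E →L[𝕜] E) :
    LinearMap.trace 𝕜 E (φ.smulRight u ∘L P) = φ (P u) := by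
  have hrank_one : ((φ.smulRight u ∘L P : E →L[𝕜] E) : E →ₗ[𝕜] E)
      = ((φ ∘L P : E →L[𝕜] 𝕜) : E →ₗ[𝕜] 𝕜).smulRight u := by
    ext
    simp
  rw [hrank_one, LinearMap.trace_smulRight]
  rfl

theorem ContinuousLinearMap.trace_comp_add_flip_comp_symm (J : E ≃L[𝕜] E) (D : E →L[𝕜] E)
    (H : E →L[𝕜] E →L[𝕜] E) (hH : ∀ a b, H a b = H b a) (w : E) :
    LinearMap.trace 𝕜 E (((J : E →L[𝕜] E) ∘L D + H.flip w) ∘L (J.symm : E →L[𝕜] E))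
      = LinearMap.trace 𝕜 E D + LinearMap.trace 𝕜 E ((J.symm : E →L[𝕜] E) ∘L H w) := by
  have hflip : H.flip w = H w := by
    ext a
    exact hH a w
  rw [ContinuousLinearMap.add_comp, ContinuousLinearMap.toLinearMap_add, map_add, hflip]
  congr 1
  · rw [← LinearMap.trace_conj' (D : E →ₗ[𝕜] E) J.toLinearEquiv, LinearEquiv.conj_apply]
    rfl
  · simpa using LinearMap.trace_comp_comm' ((J.symm : E →L[𝕜] E) : E →ₗ[𝕜] E) (H w : E →ₗ[𝕜] E)

end Jacobi

theorem HasStrictFDerivAt.hasFDerivAt_of_comp_eventuallyEq {𝕜 : Type*}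
    [NontriviallyNormedField 𝕜] {E F G : Type*} [NormedAddCommGroup E] [NormedSpace 𝕜 E]
    [CompleteSpace E] [NormedAddCommGroup F] [NormedSpace 𝕜 F] [CompleteSpace F]
    [NormedAddCommGroup G] [NormedSpace 𝕜 G] {T : E → F} {J : E ≃L[𝕜] F} {x : E}
    (hT : HasStrictFDerivAt T (J : E →L[𝕜] F) x) {v : F → G} {g : E → G} {g' : E →L[𝕜] G}
    (hg : HasFDerivAt g g' x) (hvg : ∀ᶠ y in 𝓝 x, v (T y) = g y) :
    HasFDerivAt v (g' ∘L (J.symm : F →L[𝕜] E)) (T x) := by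
  set S := hT.localInverse T J x
  have hvS : v =ᶠ[𝓝 (T x)] g ∘ S := by
    filter_upwards [hT.eventually_right_inverse, hT.localInverse_tendsto.eventually hvg]
      with y hTS hvgS
    rw [Function.comp_apply, ← hvgS, hTS]
  refine HasFDerivAt.congr_of_eventuallyEq ?_ hvS
  refine HasFDerivAt.comp (T x) ?_ hT.to_localInverse.hasFDerivAt
  rwa [show S (T x) = x from hT.localInverse_apply_image]

theorem trace_fderiv_piola_transform {𝕜 : Type*} [RCLike 𝕜] {E : Type*} [NormedAddCommGroup E]
    [NormedSpace 𝕜 E] [FiniteDimensional 𝕜 E] {T vhat v : E → E} {x : E}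
    (hT : ContDiffAt 𝕜 2 T x) (hvhat : DifferentiableAt 𝕜 vhat x)
    (hdet : (fderiv 𝕜 T x).det ≠ 0)
    (hv : ∀ᶠ y in 𝓝 x, v (T y) = ((fderiv 𝕜 T y).det)⁻¹ • fderiv 𝕜 T y (vhat y)) :
    LinearMap.trace 𝕜 E (fderiv 𝕜 v (T x))
      = ((fderiv 𝕜 T x).det)⁻¹ * LinearMap.trace 𝕜 E (fderiv 𝕜 vhat x) := by
  have : CompleteSpace E := FiniteDimensional.complete 𝕜 E
  set J := (fderiv 𝕜 T x).toContinuousLinearEquivOfDetNeZero hdet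
  have hJ : (J : E →L[𝕜] E) = fderiv 𝕜 T x := by simp [J]
  set H := fderiv 𝕜 (fderiv 𝕜 T) x
  have hTJ : HasStrictFDerivAt T (J : E →L[𝕜] E) x := hJ ▸ hT.hasStrictFDerivAt (by norm_num)
  have hH : HasFDerivAt (fderiv 𝕜 T) H x :=
    ((hT.fderiv_right (m := 1) le_rfl).differentiableAt one_ne_zero).hasFDerivAt
  have hHsymm : ∀ a b, H a b = H b a := hT.isSymmSndFDerivAt (by simp)
  have hdetT := (ContinuousLinearMap.differentiable_det (fderiv 𝕜 T x)).hasFDerivAt.comp x hH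
  have hpiola := ((hasFDerivAt_inv hdet).comp x hdetT).smul (hH.clm_apply hvhat.hasFDerivAt)
  rw [(hTJ.hasFDerivAt_of_comp_eventuallyEq hpiola hv).fderiv]
  simp only [Function.comp_apply, ← hJ]
  rw [ContinuousLinearMap.add_comp, ContinuousLinearMap.smul_comp,
    ContinuousLinearMap.toLinearMap_add, map_add, ContinuousLinearMap.toLinearMap_smul, map_smul,
    ContinuousLinearMap.trace_comp_add_flip_comp_symm J _ H hHsymm,
    ContinuousLinearMap.trace_smulRight_comp]
  simp only [ContinuousLinearMap.coe_comp, Function.comp_apply, ContinuousLinearEquiv.coe_coe,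
    ContinuousLinearEquiv.symm_apply_apply, ContinuousLinearMap.fderiv_det_apply,
    ContinuousLinearMap.toSpanSingleton_apply, smul_eq_mul]
  rw [hJ]
  field_simp
  ring

theorem pdiv_eq_trace {d : ℕ} (w : (Fin d → ℝ) → (Fin d → ℝ)) (x : Fin d → ℝ) :
    pdiv w x = LinearMap.trace ℝ (Fin d → ℝ) (fderiv ℝ w x) := by
  rw [LinearMap.trace_eq_matrix_trace ℝ (Pi.basisFun ℝ (Fin d)), LinearMap.toMatrix_eq_toMatrix']
  simp [pdiv, Matrix.trace, LinearMap.toMatrix'_apply]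

theorem piola_preserves_divergence_integral_general {d : ℕ}
    (Khat K U W : Set (Fin d → ℝ))
    (hKhat : IsOpen Khat)
    (hU : IsOpen U) (hUK : closure Khat ⊆ U)
    (hW : IsOpen W) (hWK : closure Khat ⊆ W)
    (T : (Fin d → ℝ) → (Fin d → ℝ))
    (hT : ContDiffOn ℝ 2 T U)
    (hTbij : Set.BijOn T Khat K)
    (hJ : ∀ xh ∈ closure Khat, 0 < (fderiv ℝ T xh).det)
    (vhat : (Fin d → ℝ) → (Fin d → ℝ))
    (hvhat : ContDiffOn ℝ 1 vhat W)
    (qhat : (Fin d → ℝ) → ℝ)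
    (v : (Fin d → ℝ) → (Fin d → ℝ)) (q : (Fin d → ℝ) → ℝ)
    (hv : ∀ xh ∈ Khat,
      v (T xh) = ((fderiv ℝ T xh).det)⁻¹ • fderiv ℝ T xh (vhat xh))
    (hq : ∀ xh ∈ Khat, q (T xh) = qhat xh) :
    ∫ x in K, pdiv v x * q x = ∫ xh in Khat, pdiv vhat xh * qhat xh := by
  have hTdiff : ∀ x ∈ Khat, HasFDerivWithinAt T (fderiv ℝ T x) Khat x := fun x hx =>
    ((hT.contDiffAt (hU.mem_nhds (hUK (subset_closure hx)))).differentiableAt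
      two_ne_zero).hasFDerivAt.hasFDerivWithinAt
  rw [← hTbij.image_eq, integral_image_eq_integral_abs_det_fderiv_smul volume
    hKhat.measurableSet hTdiff hTbij.injOn]
  refine setIntegral_congr_fun hKhat.measurableSet fun x hx => ?_
  have hdet := hJ x (subset_closure hx)
  have hdiv : pdiv v (T x) = ((fderiv ℝ T x).det)⁻¹ * pdiv vhat x := by
    simp only [pdiv_eq_trace]
    exact trace_fderiv_piola_transform (hT.contDiffAt (hU.mem_nhds (hUK (subset_closure hx))))
      ((hvhat.contDiffAt (hW.mem_nhds (hWK (subset_closure hx)))).differentiableAt one_ne_zero)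
      hdet.ne' (eventually_of_mem (hKhat.mem_nhds hx) hv)
  rw [smul_eq_mul, hdiv, hq x hx, abs_of_pos hdet]
  field_simp

/-- The contravariant Piola transform preserves divergence, integral form:
if `T` is `C²` on an open neighbourhood of the closure of the bounded open set `K̂`,
maps `K̂` diffeomorphically onto the open set `K` with `det DT > 0` on the closure
of `K̂`, `v̂` is `C¹` on an open neighbourhood of the closure of `K̂`, `q̂` is
continuous and bounded on `K̂`, and `v`, `q` are the (Piola-, composition-)
push-forwards of `v̂`, `q̂`, then `∫_K (div v) q dx = ∫_{K̂} (div v̂) q̂ dx̂`. -/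
theorem piola_preserves_divergence_integral {d : ℕ}
    (Khat K U W : Set (Fin d → ℝ))
    (hKhat : IsOpen Khat) (hKhatBdd : Bornology.IsBounded Khat) (hK : IsOpen K)
    (hU : IsOpen U) (hUK : closure Khat ⊆ U)
    (hW : IsOpen W) (hWK : closure Khat ⊆ W)
    (T : (Fin d → ℝ) → (Fin d → ℝ))
    (hT : ContDiffOn ℝ 2 T U)
    (hTbij : Set.BijOn T Khat K)
    (hJ : ∀ xh ∈ closure Khat, 0 < (fderiv ℝ T xh).det)
    (vhat : (Fin d → ℝ) → (Fin d → ℝ))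
    (hvhat : ContDiffOn ℝ 1 vhat W)
    (qhat : (Fin d → ℝ) → ℝ)
    (hqhat : ContinuousOn qhat Khat) (hqhatBdd : ∃ M : ℝ, ∀ xh ∈ Khat, |qhat xh| ≤ M)
    (v : (Fin d → ℝ) → (Fin d → ℝ)) (q : (Fin d → ℝ) → ℝ)
    (hv : ∀ xh ∈ Khat,
      v (T xh) = ((fderiv ℝ T xh).det)⁻¹ • fderiv ℝ T xh (vhat xh))
    (hq : ∀ xh ∈ Khat, q (T xh) = qhat xh) :
    ∫ x in K, pdiv v x * q x = ∫ xh in Khat, pdiv vhat xh * qhat xh :=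
  piola_preserves_divergence_integral_general Khat K U W hKhat hU hUK hW hWK T hT hTbij hJ vhat
    hvhat qhat v q hv hq
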